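/- arXiv:2507.07749 — 2 statements merged into one kernel-verified Lean document; each statement's English description precedes it below -/
import Mathlib

section
/- Let x : [0,ηε] → ℝ^{n_x}, u : [0,ηε] → ℝ^{n_u} with u(0) = u⁰, and suppose: (i) |√h(t,x̂) − √h(t,x̃)| ≤ L_h‖x̂ − x̃‖ for all x̂, x̃ and t; (ii) √(h(t,ℓ(v))) ≤ α₁₂‖v − u*(t)‖ for all v, t; (iii) sup_{t₁,t₂≥0}‖u*(t₁) − u*(t₂)‖ ≤ ν; (iv) σ₁₁‖x(t) − ℓ(u(t))‖ ≤ √(V(x(t),u(t))); (v) ‖u̇(s)‖ ≤ (c_u/(η√ε))·√(h(s,x(s))) for all s. Then for all t ∈ [0,ηε], √(h(t,x(t))) ≤ α·(‖u⁰ − u*(0)‖ + ν) + (L_h/σ₁₁)·√(V(x(t),u(t))) + (α·L_h·c_u/(σ₁₁·η√ε))·∫₀ᵗ √(V(x(s),u(s))) ds, where α := α₁₂·e^{α₁₂·c_u·√ε}. -/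
/-!
Write `A = α₁₂ (‖u⁰ - u*(0)‖ + ν)` and `B = (L_h/σ₁₁) √V`. Comparing `x(t)` with the steady state
`ℓ(u(t))` through (i), (ii) and (iv), and `u(t) = u⁰ + ∫₀ᵗ u̇` with `u*(t)` through (iii), gives
`√h ≤ A + B + α₁₂ ∫₀ᵗ ‖u̇‖`. By (v) the speed `‖u̇‖` is in turn at most `c_u/(η√ε) · √h`, so
`Z = A + α₁₂ ∫₀ᵗ ‖u̇‖` satisfies a linear integral inequality with rate `K = α₁₂ c_u/(η√ε)`, and
Grönwall's lemma gives `Z(t) ≤ e^{Kt} A + K e^{Kt} ∫₀ᵗ B`. On the horizon `t ≤ ηε` the factor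
`e^{Kt}` is at most `e^{α₁₂ c_u √ε}`.
-/

open Real MeasureTheory Set

section Primitive

variable {E : Type*} [NormedAddCommGroup E] [NormedSpace ℝ E] {f : ℝ → E} {a b : ℝ}

theorem IntervalIntegrable.continuousOn_primitive_Icc (hab : a ≤ b)
    (hf : IntervalIntegrable f volume a b) :
    ContinuousOn (fun t => ∫ s in a..t, f s) (Icc a b) := by
  simpa only [uIcc_of_le hab] using
    intervalIntegral.continuousOn_primitive_interval' hf left_mem_uIcc

theorem ContinuousOn.hasDerivAt_primitive_of_mem_Ioo [CompleteSpace E] {r : ℝ}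
    (hf : ContinuousOn f (Icc a b)) (hr : r ∈ Ioo a b) :
    HasDerivAt (fun t => ∫ s in a..t, f s) (f r) r :=
  intervalIntegral.integral_hasDerivAt_right
    ((hf.mono (Icc_subset_Icc_right hr.2.le)).intervalIntegrable_of_Icc hr.1.le)
    ((hf.mono Ioo_subset_Icc_self).stronglyMeasurableAtFilter isOpen_Ioo r hr)
    (hf.continuousAt (Icc_mem_nhds hr.1 hr.2))

end Primitive

theorem le_exp_mul_add_integral_of_le_add_integral {a b c K : ℝ} {φ W : ℝ → ℝ} (hK : 0 ≤ K)
    (hφ : ContinuousOn φ (Icc a b)) (hW : ContinuousOn W (Icc a b))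
    (h : ∀ t ∈ Icc a b, W t ≤ c + ∫ s in a..t, (φ s + K * W s)) :
    ∀ t ∈ Icc a b, W t ≤ exp (K * (t - a)) * c + ∫ s in a..t, exp (K * (t - s)) * φ s := by
  intro t ht
  have hab : a ≤ b := ht.1.trans ht.2
  set R : ℝ → ℝ := fun r => c + ∫ s in a..r, (φ s + K * W s) with hR
  have hg : ContinuousOn (fun s => φ s + K * W s) (Icc a b) := hφ.add (continuousOn_const.mul hW)
  have hψ : ContinuousOn (fun s => exp (-(K * s)) * φ s) (Icc a b) :=
    (continuous_exp.comp (continuous_const.mul continuous_id).neg).continuousOn.mul hφ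
  have hexp : ∀ r, HasDerivAt (fun r => exp (-(K * r))) (-K * exp (-(K * r))) r := fun r => by
    simpa [mul_comm] using (((hasDerivAt_id r).const_mul K).neg).exp
  -- integrating factor `e^{-Kr}`; the derivative is nonpositive because `W ≤ R`
  have hanti : AntitoneOn (fun r => exp (-(K * r)) * R r - ∫ s in a..r, exp (-(K * s)) * φ s)
      (Icc a b) := by
    refine antitoneOn_of_hasDerivWithinAt_nonpos (convex_Icc a b)
      (f' := fun r => exp (-(K * r)) * (K * (W r - R r))) ?_ (fun r hr => ?_) (fun r hr => ?_)
    · exact ((continuous_exp.comp (continuous_const.mul continuous_id).neg).continuousOn.mul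
        (continuousOn_const.add ((hg.intervalIntegrable_of_Icc hab).continuousOn_primitive_Icc
          hab))).sub ((hψ.intervalIntegrable_of_Icc hab).continuousOn_primitive_Icc hab)
    · rw [interior_Icc] at hr ⊢
      refine (((hexp r).fun_mul ((hg.hasDerivAt_primitive_of_mem_Ioo hr).const_add c)).fun_sub
        (hψ.hasDerivAt_primitive_of_mem_Ioo hr)).hasDerivWithinAt.congr_deriv ?_
      ring
    · rw [interior_Icc] at hr
      exact mul_nonpos_of_nonneg_of_nonpos (exp_pos _).le
        (mul_nonpos_of_nonneg_of_nonpos hK (sub_nonpos.2 (h r (Ioo_subset_Icc_self hr))))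
  have hF : exp (-(K * t)) * R t ≤ exp (-(K * a)) * c + ∫ s in a..t, exp (-(K * s)) * φ s := by
    have := hanti ⟨le_rfl, hab⟩ ht ht.1
    simp only [hR, intervalIntegral.integral_same, add_zero, sub_zero] at this
    linarith
  calc W t ≤ R t := h t ht
    _ = exp (K * t) * (exp (-(K * t)) * R t) := by rw [← mul_assoc, ← exp_add]; simp
    _ ≤ exp (K * t) * (exp (-(K * a)) * c + ∫ s in a..t, exp (-(K * s)) * φ s) := by gcongr
    _ = _ := by
      rw [mul_add, ← intervalIntegral.integral_const_mul, ← mul_assoc, ← exp_add, ← mul_neg,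
        ← mul_add, ← sub_eq_add_neg]
      congr 1
      refine intervalIntegral.integral_congr fun s _ => ?_
      rw [← mul_assoc, ← exp_add, ← mul_neg, ← mul_add, ← sub_eq_add_neg]

theorem le_exp_mul_add_of_le_add_integral_of_le_mul {a b c k L : ℝ} {y w B : ℝ → ℝ}
    (hk : 0 ≤ k) (hL : 0 ≤ L) (hB : ContinuousOn B (Icc a b)) (hB₀ : ∀ s ∈ Icc a b, 0 ≤ B s)
    (hw : IntervalIntegrable w volume a b)
    (hy : ∀ r ∈ Icc a b, y r ≤ c + B r + k * ∫ s in a..r, w s)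
    (hwy : ∀ s ∈ Icc a b, w s ≤ L * y s) :
    ∀ t ∈ Icc a b, y t ≤ exp (k * L * (t - a)) * c + B t
      + k * L * exp (k * L * (t - a)) * ∫ s in a..t, B s := by
  intro t ht
  have hab : a ≤ b := ht.1.trans ht.2
  set Z : ℝ → ℝ := fun r => c + k * ∫ s in a..r, w s
  have hZc : ContinuousOn Z (Icc a b) :=
    continuousOn_const.add (continuousOn_const.mul (hw.continuousOn_primitive_Icc hab))
  have hZle : ∀ r ∈ Icc a b, Z r ≤ c + ∫ s in a..r, (k * L * B s + k * L * Z s) := by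
    intro r hr
    have hsub : Icc a r ⊆ Icc a b := Icc_subset_Icc_right hr.2
    have hint : IntervalIntegrable (fun s => L * (Z s + B s)) volume a r :=
      ((continuousOn_const.mul (hZc.add hB)).mono hsub).intervalIntegrable_of_Icc hr.1
    have hwr : IntervalIntegrable w volume a r :=
      hw.mono_set (by rw [uIcc_of_le hr.1, uIcc_of_le hab]; exact hsub)
    have hmono : ∫ s in a..r, w s ≤ ∫ s in a..r, L * (Z s + B s) :=
      intervalIntegral.integral_mono_on hr.1 hwr hint fun s hs =>
        (hwy s (hsub hs)).trans (by gcongr; linarith [hy s (hsub hs)])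
    calc Z r = c + k * ∫ s in a..r, w s := rfl
      _ ≤ c + k * ∫ s in a..r, L * (Z s + B s) := by gcongr
      _ = c + ∫ s in a..r, (k * L * B s + k * L * Z s) := by
        rw [← intervalIntegral.integral_const_mul]
        congr 1
        exact intervalIntegral.integral_congr fun s _ => by ring
  have hgron := le_exp_mul_add_integral_of_le_add_integral (φ := fun s => k * L * B s)
    (mul_nonneg hk hL) (continuousOn_const.mul hB) hZc hZle t ht
  have hsub : Icc a t ⊆ Icc a b := Icc_subset_Icc_right ht.2
  have hforcing : ∫ s in a..t, exp (k * L * (t - s)) * (k * L * B s)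
      ≤ ∫ s in a..t, k * L * exp (k * L * (t - a)) * B s :=
    intervalIntegral.integral_mono_on ht.1
      ((((continuous_exp.comp (continuous_const.mul (continuous_const.sub continuous_id))
        ).continuousOn.mul (continuousOn_const.mul hB)).mono hsub).intervalIntegrable_of_Icc ht.1)
      (((continuousOn_const.mul hB).mono hsub).intervalIntegrable_of_Icc ht.1)
      fun s hs => by
        have hexp : exp (k * L * (t - s)) ≤ exp (k * L * (t - a)) :=
          exp_le_exp.2 (mul_le_mul_of_nonneg_left (by linarith [hs.1]) (mul_nonneg hk hL))
        have := mul_le_mul_of_nonneg_right hexp (mul_nonneg (mul_nonneg hk hL) (hB₀ s (hsub hs)))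
        linarith
  rw [intervalIntegral.integral_const_mul] at hforcing
  linarith [hy t ht]

theorem norm_sub_le_norm_sub_add_integral_norm {E : Type*} [NormedAddCommGroup E]
    [NormedSpace ℝ E] {u' : ℝ → E} {u₀ v : E} {a r : ℝ} (har : a ≤ r) :
    ‖u₀ + (∫ s in a..r, u' s) - v‖ ≤ ‖u₀ - v‖ + ∫ s in a..r, ‖u' s‖ :=
  calc ‖u₀ + (∫ s in a..r, u' s) - v‖ = ‖(u₀ - v) + ∫ s in a..r, u' s‖ := by abel_nf
    _ ≤ ‖u₀ - v‖ + ‖∫ s in a..r, u' s‖ := norm_add_le _ _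
    _ ≤ ‖u₀ - v‖ + ∫ s in a..r, ‖u' s‖ := by
      gcongr; exact intervalIntegral.norm_integral_le_integral_norm har

theorem le_add_div_mul_of_abs_sub_le {E : Type*} [SeminormedAddCommGroup E] {g : E → ℝ}
    {x e : E} {L σ m s : ℝ} (hσ : 0 < σ) (hL : 0 ≤ L) (hg : |g x - g e| ≤ L * ‖x - e‖)
    (he : g e ≤ m) (hx : σ * ‖x - e‖ ≤ s) : g x ≤ m + L / σ * s := by
  have : L * ‖x - e‖ ≤ L / σ * s := by
    rw [div_mul_eq_mul_div, le_div_iff₀ hσ, mul_assoc, mul_comm ‖x - e‖]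
    exact mul_le_mul_of_nonneg_left hx hL
  linarith [le_abs_self (g x - g e)]

theorem div_mul_sqrt_mul_le_mul_sqrt {c η ε t : ℝ} (hc : 0 ≤ c) (hη : 0 < η) (hε : 0 < ε)
    (ht : t ≤ η * ε) : c / (η * √ε) * t ≤ c * √ε :=
  calc c / (η * √ε) * t ≤ c / (η * √ε) * (η * ε) := by gcongr
    _ = c * √ε := by field_simp; rw [sq_sqrt hε.le]

theorem sqrt_h_along_solution_bound_general
    (nx nu : ℕ) (γ η ε L_h α₁₂ σ₁₁ ν c_u α : ℝ)
    (hγ : 0 < γ) (hη : 0 < η) (hε : 0 < ε) (hLh : 0 < L_h)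
    (hα₁₂ : 0 < α₁₂) (hσ₁₁ : 0 < σ₁₁) (hν : 0 ≤ ν)
    (hcu : c_u = γ * Real.sqrt (2 * π * nu * (nu + 1)))
    (hα : α = α₁₂ * Real.exp (α₁₂ * c_u * Real.sqrt ε))
    (h : ℝ → EuclideanSpace ℝ (Fin nx) → ℝ)
    (ℓ : EuclideanSpace ℝ (Fin nu) → EuclideanSpace ℝ (Fin nx))
    (ustar : ℝ → EuclideanSpace ℝ (Fin nu))
    (V : EuclideanSpace ℝ (Fin nx) → EuclideanSpace ℝ (Fin nu) → ℝ)
    (hVcont : Continuous (fun p : EuclideanSpace ℝ (Fin nx) × EuclideanSpace ℝ (Fin nu) => V p.1 p.2))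
    (x : ℝ → EuclideanSpace ℝ (Fin nx))
    (u u' : ℝ → EuclideanSpace ℝ (Fin nu))
    (u0 : EuclideanSpace ℝ (Fin nu))
    (hxcont : ContinuousOn x (Set.Icc 0 (η * ε)))
    (hint : IntervalIntegrable u' MeasureTheory.volume 0 (η * ε))
    (hAC : ∀ t ∈ Set.Icc (0:ℝ) (η * ε), u t = u0 + ∫ s in (0:ℝ)..t, u' s)
    -- (i) Lipschitz continuity of √h in x
    (hLip : ∀ (t : ℝ), 0 ≤ t → ∀ xa xb : EuclideanSpace ℝ (Fin nx),
      |Real.sqrt (h t xa) - Real.sqrt (h t xb)| ≤ L_h * ‖xa - xb‖)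
    -- (ii) upper output bound at the steady state
    (hbound : ∀ (v : EuclideanSpace ℝ (Fin nu)) (t : ℝ), 0 ≤ t →
      Real.sqrt (h t (ℓ v)) ≤ α₁₂ * ‖v - ustar t‖)
    -- (iii) oscillation bound of the reference input
    (hosc : ∀ t₁ t₂ : ℝ, 0 ≤ t₁ → 0 ≤ t₂ → ‖ustar t₁ - ustar t₂‖ ≤ ν)
    -- (iv) Lyapunov lower bound
    (hVlb : ∀ t ∈ Set.Icc (0:ℝ) (η * ε),
      σ₁₁ * ‖x t - ℓ (u t)‖ ≤ Real.sqrt (V (x t) (u t)))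
    -- (v) controller speed bound
    (hu' : ∀ s ∈ Set.Icc (0:ℝ) (η * ε),
      ‖u' s‖ ≤ c_u / (η * Real.sqrt ε) * Real.sqrt (h s (x s))) :
    ∀ t ∈ Set.Icc (0:ℝ) (η * ε),
      Real.sqrt (h t (x t)) ≤ α * (‖u0 - ustar 0‖ + ν)
        + (L_h / σ₁₁) * Real.sqrt (V (x t) (u t))
        + (α * L_h * c_u / (σ₁₁ * η * Real.sqrt ε)) *
            ∫ s in (0:ℝ)..t, Real.sqrt (V (x s) (u s)) := by
  intro t ht
  have hT : 0 ≤ η * ε := ht.1.trans ht.2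
  have hu : ContinuousOn u (Icc 0 (η * ε)) :=
    (continuousOn_const.add (hint.continuousOn_primitive_Icc hT)).congr hAC
  have hV : ContinuousOn (fun s => L_h / σ₁₁ * √(V (x s) (u s))) (Icc 0 (η * ε)) :=
    continuousOn_const.mul (continuous_sqrt.comp_continuousOn
      (hVcont.comp_continuousOn (hxcont.prodMk hu)))
  have hy : ∀ r ∈ Icc (0:ℝ) (η * ε), √(h r (x r)) ≤ α₁₂ * (‖u0 - ustar 0‖ + ν)
      + L_h / σ₁₁ * √(V (x r) (u r)) + α₁₂ * ∫ s in (0:ℝ)..r, ‖u' s‖ := by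
    intro r hr
    have hsteady := le_add_div_mul_of_abs_sub_le (g := fun z => √(h r z)) hσ₁₁ hLh.le
      (hLip r hr.1 _ _) (hbound (u r) r hr.1) (hVlb r hr)
    have hinput : ‖u r - ustar r‖ ≤ ‖u0 - ustar 0‖ + ν + ∫ s in (0:ℝ)..r, ‖u' s‖ := by
      rw [hAC r hr]
      linarith [norm_sub_le_norm_sub_add_integral_norm (u' := u') (u₀ := u0) (v := ustar r) hr.1,
        norm_sub_le_norm_sub_add_norm_sub u0 (ustar 0) (ustar r), hosc 0 r le_rfl hr.1]
    linarith [mul_le_mul_of_nonneg_left hinput hα₁₂.le]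
  have hcu₀ : 0 ≤ c_u := hcu ▸ by positivity
  have key := le_exp_mul_add_of_le_add_integral_of_le_mul hα₁₂.le (by positivity) hV
    (fun s _ => by positivity) hint.norm hy hu' t ht
  rw [sub_zero, intervalIntegral.integral_const_mul] at key
  have hE : α₁₂ * exp (α₁₂ * (c_u / (η * √ε)) * t) ≤ α := by
    rw [hα]
    refine mul_le_mul_of_nonneg_left (exp_le_exp.2 ?_) hα₁₂.le
    rw [mul_assoc, mul_assoc]
    exact mul_le_mul_of_nonneg_left (div_mul_sqrt_mul_le_mul_sqrt hcu₀ hη hε ht.2) hα₁₂.le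
  have hI : 0 ≤ c_u / (η * √ε) * (L_h / σ₁₁) * ∫ s in (0:ℝ)..t, √(V (x s) (u s)) :=
    mul_nonneg (by positivity) (intervalIntegral.integral_nonneg ht.1 fun _ _ => sqrt_nonneg _)
  rw [show α * L_h * c_u / (σ₁₁ * η * √ε) = α * (c_u / (η * √ε) * (L_h / σ₁₁)) by ring]
  linarith [mul_le_mul_of_nonneg_right hE (by positivity : 0 ≤ ‖u0 - ustar 0‖ + ν),
    mul_le_mul_of_nonneg_right hE hI]

/-- Grönwall-type estimate for `√(h(t,x(t)))` along solutions:
under the Lipschitz bound (i), the steady-state output bound (ii), the oscillation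
bound (iii), the Lyapunov lower bound (iv) and the controller speed bound (v),
`√(h(t,x(t))) ≤ α(‖u⁰−u*(0)‖+ν) + (L_h/σ₁₁)√V(x(t),u(t))
  + (αL_h c_u/(σ₁₁η√ε))∫₀ᵗ √V(x(s),u(s)) ds`, with `α = α₁₂ e^{α₁₂ c_u √ε}`
and `c_u = γ√(2π n_u (n_u+1))`. -/
theorem sqrt_h_along_solution_bound
    (nx nu : ℕ) (γ η ε L_h α₁₂ σ₁₁ ν c_u α : ℝ)
    (hγ : 0 < γ) (hη : 0 < η) (hε : 0 < ε) (hLh : 0 < L_h)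
    (hα₁₂ : 0 < α₁₂) (hσ₁₁ : 0 < σ₁₁) (hν : 0 ≤ ν)
    (hcu : c_u = γ * Real.sqrt (2 * π * nu * (nu + 1)))
    (hα : α = α₁₂ * Real.exp (α₁₂ * c_u * Real.sqrt ε))
    (h : ℝ → EuclideanSpace ℝ (Fin nx) → ℝ)
    (ℓ : EuclideanSpace ℝ (Fin nu) → EuclideanSpace ℝ (Fin nx))
    (ustar : ℝ → EuclideanSpace ℝ (Fin nu))
    (V : EuclideanSpace ℝ (Fin nx) → EuclideanSpace ℝ (Fin nu) → ℝ)
    (hVcont : Continuous (fun p : EuclideanSpace ℝ (Fin nx) × EuclideanSpace ℝ (Fin nu) => V p.1 p.2))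
    (x : ℝ → EuclideanSpace ℝ (Fin nx))
    (u u' : ℝ → EuclideanSpace ℝ (Fin nu))
    (u0 : EuclideanSpace ℝ (Fin nu))
    (hxcont : ContinuousOn x (Set.Icc 0 (η * ε)))
    (hu0 : u 0 = u0)
    (hint : IntervalIntegrable u' MeasureTheory.volume 0 (η * ε))
    (hAC : ∀ t ∈ Set.Icc (0:ℝ) (η * ε), u t = u0 + ∫ s in (0:ℝ)..t, u' s)
    -- (i) Lipschitz continuity of √h in x
    (hLip : ∀ (t : ℝ), 0 ≤ t → ∀ xa xb : EuclideanSpace ℝ (Fin nx),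
      |Real.sqrt (h t xa) - Real.sqrt (h t xb)| ≤ L_h * ‖xa - xb‖)
    -- (ii) upper output bound at the steady state
    (hbound : ∀ (v : EuclideanSpace ℝ (Fin nu)) (t : ℝ), 0 ≤ t →
      Real.sqrt (h t (ℓ v)) ≤ α₁₂ * ‖v - ustar t‖)
    -- (iii) oscillation bound of the reference input
    (hosc : ∀ t₁ t₂ : ℝ, 0 ≤ t₁ → 0 ≤ t₂ → ‖ustar t₁ - ustar t₂‖ ≤ ν)
    -- (iv) Lyapunov lower bound
    (hVlb : ∀ t ∈ Set.Icc (0:ℝ) (η * ε),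
      σ₁₁ * ‖x t - ℓ (u t)‖ ≤ Real.sqrt (V (x t) (u t)))
    -- (v) controller speed bound
    (hu' : ∀ s ∈ Set.Icc (0:ℝ) (η * ε),
      ‖u' s‖ ≤ c_u / (η * Real.sqrt ε) * Real.sqrt (h s (x s))) :
    ∀ t ∈ Set.Icc (0:ℝ) (η * ε),
      Real.sqrt (h t (x t)) ≤ α * (‖u0 - ustar 0‖ + ν)
        + (L_h / σ₁₁) * Real.sqrt (V (x t) (u t))
        + (α * L_h * c_u / (σ₁₁ * η * Real.sqrt ε)) *
            ∫ s in (0:ℝ)..t, Real.sqrt (V (x s) (u s)) :=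
  sqrt_h_along_solution_bound_general nx nu γ η ε L_h α₁₂ σ₁₁ ν c_u α hγ hη hε hLh hα₁₂ hσ₁₁ hν hcu
    hα h ℓ ustar V hVcont x u u' u0 hxcont hint hAC hLip hbound hosc hVlb hu'
end

section
/- Under the hypotheses of the two preceding estimates (the bound √(h(t,x(t))) ≤ α(‖u⁰−u*(0)‖+ν) + (L_h/σ₁₁)√(V(x(t),u(t))) + (αL_h c_u/(σ₁₁η√ε))∫₀ᵗ√(V(x(s),u(s)))ds with α = α₁₂e^{α₁₂c_u√ε}, and the dissipation inequality (d/dt)V ≤ −σ₂₁V + (c_uσ₂₂/(η√ε))√(V·h(t,x(t)))), fix any σ ∈ (0,σ₂₁) and set η₁(ε) := c_u·L_h·σ₂₂/(σ₁₁·(σ₂₁−σ)·√ε). Then for any η > η₁(ε) and all t ∈ [0,ηε], (d/dt) V(x(t),u(t)) ≤ −σ·V(x(t),u(t)) + √(V(x(t),u(t)))·φ(t), where φ(t) := (α·c_u·σ₂₂/(η√ε))·(‖u⁰ − u*(0)‖ + ν + (c_u·L_h/(σ₁₁·η√ε))·∫₀ᵗ √(V(x(s),u(s))) ds). -/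
open Real

/-! Inserting the output bound `√h ≤ a + b √V` into the cross term `k √(V h)` of the dissipation
inequality produces a term `k b V`, and `η > η₁(ε)` is exactly the condition `k b ≤ σ₂₁ - σ` that
lets `-σ₂₁ V` absorb it; what remains is `√V · k a = √V · φ`. -/

theorem le_neg_mul_add_sqrt_mul_of_sqrt_le {D V H k a b r σ : ℝ} (hV : 0 ≤ V) (hk : 0 ≤ k)
    (hD : D ≤ -r * V + k * √(V * H)) (hH : √H ≤ a + b * √V) (hkb : k * b ≤ r - σ) :
    D ≤ -σ * V + √V * (k * a) := by
  have hcross : k * √(V * H) ≤ √V * (k * a) + k * b * V := by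
    calc k * √(V * H) = k * √V * √H := by rw [sqrt_mul hV]; ring
      _ ≤ k * √V * (a + b * √V) := by gcongr
      _ = √V * (k * a) + k * b * (√V * √V) := by ring
      _ = √V * (k * a) + k * b * V := by rw [mul_self_sqrt hV]
  nlinarith [mul_le_mul_of_nonneg_right hkb hV]

theorem gain_lt_of_lt_eta {c L σ₂₂ σ₁₁ d ε η : ℝ} (hσ₁₁ : 0 < σ₁₁) (hd : 0 < d) (hε : 0 < ε)
    (hη : 0 < η) (hlt : c * L * σ₂₂ / (σ₁₁ * d * √ε) < η) :
    c * σ₂₂ / (η * √ε) * (L / σ₁₁) < d := by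
  have key : c * L * σ₂₂ / (σ₁₁ * √ε) / η < d := by
    rwa [← div_lt_comm₀ hd hη, div_div, mul_right_comm σ₁₁]
  convert key using 1
  field_simp

theorem dissipation_with_phi_general
    (nx nu : ℕ) (σ σ₁₁ σ₂₁ σ₂₂ L_h γ η ε ν c_u α η₁ : ℝ)
    (hσ₁₁ : 0 < σ₁₁) (hσ₂₂ : 0 < σ₂₂)
    (hγ : 0 < γ) (hη : 0 < η) (hε : 0 < ε)
    (hσlt : σ < σ₂₁)
    (hcu : c_u = γ * Real.sqrt (2 * π * nu * (nu + 1)))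
    (hη₁ : η₁ = c_u * L_h * σ₂₂ / (σ₁₁ * (σ₂₁ - σ) * Real.sqrt ε))
    (hηgt : η₁ < η)
    (h : ℝ → EuclideanSpace ℝ (Fin nx) → ℝ)
    (V : EuclideanSpace ℝ (Fin nx) → EuclideanSpace ℝ (Fin nu) → ℝ)
    (ustar : ℝ → EuclideanSpace ℝ (Fin nu))
    (x : ℝ → EuclideanSpace ℝ (Fin nx)) (u : ℝ → EuclideanSpace ℝ (Fin nu))
    (u0 : EuclideanSpace ℝ (Fin nu))
    (hVnn : ∀ y v, 0 ≤ V y v)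
    -- the output estimate of the preceding step
    (hb : ∀ t ∈ Set.Icc (0:ℝ) (η * ε),
      Real.sqrt (h t (x t)) ≤ α * (‖u0 - ustar 0‖ + ν)
        + (L_h / σ₁₁) * Real.sqrt (V (x t) (u t))
        + (α * L_h * c_u / (σ₁₁ * η * Real.sqrt ε)) *
            ∫ s in (0:ℝ)..t, Real.sqrt (V (x s) (u s)))
    -- the dissipation inequality of the preceding step
    (hd : ∀ t ∈ Set.Icc (0:ℝ) (η * ε),
      deriv (fun s => V (x s) (u s)) t ≤ -σ₂₁ * V (x t) (u t)
        + c_u * σ₂₂ / (η * Real.sqrt ε) * Real.sqrt (V (x t) (u t) * h t (x t))) :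
    ∀ t ∈ Set.Icc (0:ℝ) (η * ε),
      deriv (fun s => V (x s) (u s)) t ≤ -σ * V (x t) (u t)
        + Real.sqrt (V (x t) (u t)) *
          (α * c_u * σ₂₂ / (η * Real.sqrt ε) *
            (‖u0 - ustar 0‖ + ν + (c_u * L_h / (σ₁₁ * η * Real.sqrt ε)) *
              ∫ s in (0:ℝ)..t, Real.sqrt (V (x s) (u s)))) := by
  intro t ht
  have hcu_nonneg : 0 ≤ c_u := hcu ▸ by positivity
  have hgain : c_u * σ₂₂ / (η * √ε) * (L_h / σ₁₁) < σ₂₁ - σ :=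
    gain_lt_of_lt_eta hσ₁₁ (sub_pos.mpr hσlt) hε hη (hη₁ ▸ hηgt)
  have hbound := hb t ht
  rw [add_right_comm] at hbound
  convert le_neg_mul_add_sqrt_mul_of_sqrt_le (hVnn _ _) (by positivity) (hd t ht) hbound
    hgain.le using 3
  field_simp

/-- combining the output estimate with the dissipation inequality.
Given `σ ∈ (0,σ₂₁)` and `η > η₁(ε) = c_u L_h σ₂₂/(σ₁₁(σ₂₁−σ)√ε)`, for all
`t ∈ [0,ηε]` one has `(d/dt)V(x(t),u(t)) ≤ −σV + √V·φ(t)` where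
`φ(t) = (αc_uσ₂₂/(η√ε))(‖u⁰−u*(0)‖+ν+(c_uL_h/(σ₁₁η√ε))∫₀ᵗ√V ds)`. -/
theorem dissipation_with_phi
    (nx nu : ℕ) (σ σ₁₁ σ₂₁ σ₂₂ L_h α₁₂ γ η ε ν c_u α η₁ : ℝ)
    (hσ₁₁ : 0 < σ₁₁) (hσ₂₁ : 0 < σ₂₁) (hσ₂₂ : 0 < σ₂₂) (hLh : 0 < L_h)
    (hα₁₂ : 0 < α₁₂) (hγ : 0 < γ) (hη : 0 < η) (hε : 0 < ε) (hν : 0 ≤ ν)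
    (hσpos : 0 < σ) (hσlt : σ < σ₂₁)
    (hcu : c_u = γ * Real.sqrt (2 * π * nu * (nu + 1)))
    (hα : α = α₁₂ * Real.exp (α₁₂ * c_u * Real.sqrt ε))
    (hη₁ : η₁ = c_u * L_h * σ₂₂ / (σ₁₁ * (σ₂₁ - σ) * Real.sqrt ε))
    (hηgt : η₁ < η)
    (h : ℝ → EuclideanSpace ℝ (Fin nx) → ℝ)
    (V : EuclideanSpace ℝ (Fin nx) → EuclideanSpace ℝ (Fin nu) → ℝ)
    (ustar : ℝ → EuclideanSpace ℝ (Fin nu))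
    (x : ℝ → EuclideanSpace ℝ (Fin nx)) (u : ℝ → EuclideanSpace ℝ (Fin nu))
    (u0 : EuclideanSpace ℝ (Fin nu)) (hu0 : u 0 = u0)
    (hhnn : ∀ t x', 0 ≤ h t x') (hVnn : ∀ y v, 0 ≤ V y v)
    -- the output estimate of the preceding step
    (hb : ∀ t ∈ Set.Icc (0:ℝ) (η * ε),
      Real.sqrt (h t (x t)) ≤ α * (‖u0 - ustar 0‖ + ν)
        + (L_h / σ₁₁) * Real.sqrt (V (x t) (u t))
        + (α * L_h * c_u / (σ₁₁ * η * Real.sqrt ε)) *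
            ∫ s in (0:ℝ)..t, Real.sqrt (V (x s) (u s)))
    -- the dissipation inequality of the preceding step
    (hd : ∀ t ∈ Set.Icc (0:ℝ) (η * ε),
      deriv (fun s => V (x s) (u s)) t ≤ -σ₂₁ * V (x t) (u t)
        + c_u * σ₂₂ / (η * Real.sqrt ε) * Real.sqrt (V (x t) (u t) * h t (x t))) :
    ∀ t ∈ Set.Icc (0:ℝ) (η * ε),
      deriv (fun s => V (x s) (u s)) t ≤ -σ * V (x t) (u t)
        + Real.sqrt (V (x t) (u t)) *
          (α * c_u * σ₂₂ / (η * Real.sqrt ε) *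
            (‖u0 - ustar 0‖ + ν + (c_u * L_h / (σ₁₁ * η * Real.sqrt ε)) *
              ∫ s in (0:ℝ)..t, Real.sqrt (V (x s) (u s)))) :=
  dissipation_with_phi_general nx nu σ σ₁₁ σ₂₁ σ₂₂ L_h γ η ε ν c_u α η₁ hσ₁₁ hσ₂₂ hγ hη hε hσlt hcu
    hη₁ hηgt h V ustar x u u0 hVnn hb hd
end
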